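/- Let f_166 be the local rule f_166(a,b,c) = (a+1)·b + c. For every integer n ≥ 1, the cyclic-boundary transition function (f_166)_{(n),*} : Q^n → Q^n is bijective if and only if n is odd; that is, CA-166_{*}(n) is reversible iff n ≡ 1 (mod 2). -/

import Mathlib

/-- The state set `Q = {0,1}` as `ZMod 2`. -/
abbrev Q : Type := ZMod 2

/-- A triplet local rule `f : Q³ → Q`. -/
abbrev Rule : Type := Q → Q → Q → Q

/-- A configuration of length `n`. -/
abbrev Config (n : ℕ) : Type := Fin n → Q

/-- The transition sending `x` to the word whose `i`-th letter is
`f (x (i-1)) (x i) (x (i+1))`, where the virtual boundary letters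
`x₀` and `x_{n+1}` are given as `x0` and `xn1`. -/
def caTrans {n : ℕ} (f : Rule) (x0 xn1 : Q) (x : Config n) : Config n :=
  fun i =>
    f (if _h : i.1 = 0 then x0
       else x ⟨i.1 - 1, Nat.lt_of_le_of_lt (Nat.sub_le _ _) i.isLt⟩)
      (x i)
      (if h : i.1 + 1 < n then x ⟨i.1 + 1, h⟩ else xn1)

/-- The first letter `x₁` of a nonempty configuration. -/
def firstCell {n : ℕ} (hn : 0 < n) (x : Config n) : Q := x ⟨0, hn⟩

/-- The last letter `xₙ` of a nonempty configuration. -/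
def lastCell {n : ℕ} (hn : 0 < n) (x : Config n) : Q :=
  x ⟨n - 1, Nat.sub_lt hn Nat.one_pos⟩

/-- Fixed boundary `a-b` : `x₀ = a`, `x_{n+1} = b`. -/
def fixedBC {n : ℕ} (f : Rule) (a b : Q) : Config n → Config n :=
  fun x => caTrans f a b x

/-- Boundary `a-*` : `x₀ = a`, `x_{n+1} = xₙ`. -/
def leftFixedBC {n : ℕ} (hn : 0 < n) (f : Rule) (a : Q) : Config n → Config n :=
  fun x => caTrans f a (lastCell hn x) x

/-- Boundary `*-b` : `x₀ = x₁`, `x_{n+1} = b`. -/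
def rightFixedBC {n : ℕ} (hn : 0 < n) (f : Rule) (b : Q) : Config n → Config n :=
  fun x => caTrans f (firstCell hn x) b x

/-- Free boundary `*-*` : `x₀ = x₁`, `x_{n+1} = xₙ`. -/
def freeBC {n : ℕ} (hn : 0 < n) (f : Rule) : Config n → Config n :=
  fun x => caTrans f (firstCell hn x) (lastCell hn x) x

/-- Cyclic boundary `*` : `x₀ = xₙ`, `x_{n+1} = x₁`. -/
def cyclicBC {n : ℕ} (hn : 0 < n) (f : Rule) : Config n → Config n :=
  fun x => caTrans f (lastCell hn x) (firstCell hn x) x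

/-- Rule 166 : `f(a,b,c) = (a+1)·b + c`. -/
def f166 : Rule := fun a b c => (a + 1) * b + c

/-!
For odd `n`, compare two preimages `x`, `y` of the same configuration through their `n`-periodic
extensions to `ℕ`. Rule 166 is permutive in its right argument, so agreement on two consecutive
cells propagates to all cells. Otherwise agreements are isolated: if `x` and `y` disagree
everywhere, the local rule forces `x` to flip at every cell; if they agree somewhere, it forces
agreement and disagreement to alternate from there on. Both patterns have period `2`, which is
incompatible with the odd period `n`.

For even `n`, the two alternating configurations `0101…` and `1010…` both map to `11…1`.
-/

open Function

section Periodic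

variable {n : ℕ} (hn : 0 < n)

def periodicExt (x : Config n) (k : ℕ) : Q := x ⟨k % n, Nat.mod_lt k hn⟩

variable {hn}

lemma periodicExt_congr (x : Config n) {k l : ℕ} (h : k ≡ l [MOD n]) :
    periodicExt hn x k = periodicExt hn x l :=
  congrArg x (Fin.ext h)

lemma periodicExt_periodic (x : Config n) : Periodic (periodicExt hn x) n :=
  fun _ => periodicExt_congr x Nat.add_modEq_right

lemma periodicExt_of_lt (x : Config n) {k : ℕ} (hk : k < n) :
    periodicExt hn x k = x ⟨k, hk⟩ :=
  congrArg x (Fin.ext (Nat.mod_eq_of_lt hk))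

lemma periodicExt_injective : Injective (periodicExt hn : Config n → ℕ → Q) := fun x y h =>
  funext fun i => by
    simpa only [periodicExt_of_lt x i.isLt, periodicExt_of_lt y i.isLt] using congrFun h i

lemma cyclicBC_apply (f : Rule) (x : Config n) (i : Fin n) :
    cyclicBC hn f x i = f (periodicExt hn x (i + (n - 1))) (x i) (periodicExt hn x (i + 1)) := by
  have hleft : (if _h : i.1 = 0 then lastCell hn x
      else x ⟨i.1 - 1, Nat.lt_of_le_of_lt (Nat.sub_le _ _) i.isLt⟩)
      = periodicExt hn x (i + (n - 1)) := by
    split_ifs with h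
    · rw [h, zero_add, periodicExt_of_lt]; rfl
    · rw [show i.1 + (n - 1) = i.1 - 1 + n by omega, periodicExt_periodic, periodicExt_of_lt]
  have hright : (if h : i.1 + 1 < n then x ⟨i.1 + 1, h⟩ else firstCell hn x)
      = periodicExt hn x (i + 1) := by
    split_ifs with h
    · rw [periodicExt_of_lt]
    · rw [show i.1 + 1 = 0 + n by omega, periodicExt_periodic, periodicExt_of_lt]; rfl
  simp only [cyclicBC, caTrans, hleft, hright]

lemma periodicExt_cyclicBC (f : Rule) (x : Config n) (k : ℕ) :
    periodicExt hn (cyclicBC hn f x) (k + 1)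
      = f (periodicExt hn x k) (periodicExt hn x (k + 1)) (periodicExt hn x (k + 2)) := by
  have hk : (k + 1) % n ≡ k + 1 [MOD n] := Nat.mod_modEq _ _
  have hk' : (k + 1) % n + (n - 1) ≡ k [MOD n] :=
    calc (k + 1) % n + (n - 1) ≡ k + 1 + (n - 1) [MOD n] := hk.add_right _
      _ = k + n := by omega
      _ ≡ k [MOD n] := Nat.add_modEq_right
  rw [periodicExt, cyclicBC_apply, ← periodicExt_of_lt x (Nat.mod_lt _ hn),
    periodicExt_congr x hk', periodicExt_congr x hk, periodicExt_congr x (hk.add_right 1)]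

end Periodic

lemma ZMod.two_eq_add_one_of_ne {a b : ZMod 2} (h : a ≠ b) : a = b + 1 := by
  revert a b; decide

lemma Function.Periodic.eq_of_eventually_eq {β : Type*} {a b : ℕ → β} {n : ℕ}
    (ha : Periodic a n) (hb : Periodic b n) (hn : 0 < n) {k : ℕ} (h : ∀ j ≥ k, a j = b j) :
    a = b := by
  funext j
  rw [← ha.nat_mul k j, ← hb.nat_mul k j]
  exact h _ (le_add_left (Nat.le_mul_of_pos_right k hn))

-- A sequence in `ZMod 2` flipping at every step from `k₀` on would have period `2`.
lemma Function.Periodic.exists_eq_succ_of_odd {s : ℕ → ZMod 2} {n : ℕ} (hs : Periodic s n)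
    (hn : Odd n) (k₀ : ℕ) : ∃ k ≥ k₀, s (k + 1) = s k := by
  by_contra! hflip
  have hlin : ∀ m : ℕ, s (k₀ + m) = s k₀ + m := by
    intro m
    induction m with
    | zero => simp
    | succ m ih =>
      rw [← add_assoc, ZMod.two_eq_add_one_of_ne (hflip _ (Nat.le_add_right _ _)), ih]
      push_cast
      ring
  have hself := hlin n
  rw [hs, ZMod.natCast_eq_one_iff_odd.mpr hn, left_eq_add] at hself
  exact one_ne_zero hself

lemma f166_right_injective (a b : Q) : Injective (f166 a b) :=
  add_right_injective _

lemma f166_one_left (b c : Q) : f166 1 b c = c := by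
  revert b c; decide

lemma f166_ne_of_ne_of_ne_of_ne {a b c a' b' c' : Q} (h : f166 a b c = f166 a' b' c')
    (ha : a ≠ a') (hb : b ≠ b') (hc : c ≠ c') : b ≠ a := by
  revert a b c a' b' c'; decide

lemma f166_eq_one_of_ne_of_ne {a b c a' c' : Q} (h : f166 a b c = f166 a' b c')
    (ha : a ≠ a') (hc : c ≠ c') : b = 1 := by
  revert a b c a' c'; decide

section Rule166

variable {a b : ℕ → Q}
  (hab : ∀ k, f166 (a k) (a (k + 1)) (a (k + 2)) = f166 (b k) (b (k + 1)) (b (k + 2)))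
include hab

lemma eventually_eq_of_f166_eq {k : ℕ} (h₀ : a k = b k) (h₁ : a (k + 1) = b (k + 1)) :
    ∀ j ≥ k, a j = b j := by
  suffices ∀ j ≥ k, a j = b j ∧ a (j + 1) = b (j + 1) from fun j hj => (this j hj).1
  intro j hj
  induction j, hj using Nat.le_induction with
  | base => exact ⟨h₀, h₁⟩
  | succ j _ ih =>
    have h := hab j
    rw [← ih.1, ← ih.2] at h
    exact ⟨ih.2, f166_right_injective _ _ h⟩

lemma f166_eq_alternating (hsep : ∀ k, a k = b k → a (k + 1) ≠ b (k + 1)) {p : ℕ}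
    (hp : a p ≠ b p) (hp₁ : a (p + 1) = b (p + 1)) :
    ∀ k ≥ p, (a k ≠ b k ∧ a (k + 1) = b (k + 1)) ∨
      (a k = b k ∧ a k = 1 ∧ a (k + 1) ≠ b (k + 1)) := by
  intro k hk
  induction k, hk using Nat.le_induction with
  | base => exact Or.inl ⟨hp, hp₁⟩
  | succ k _ ih =>
    rcases ih with ⟨hne, heq⟩ | ⟨heq, hone, hne⟩
    · have h := hab k
      rw [← heq] at h
      exact Or.inr ⟨heq, f166_eq_one_of_ne_of_ne h hne (hsep _ heq), hsep _ heq⟩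
    · have h := hab k
      rw [← heq, hone, f166_one_left, f166_one_left] at h
      exact Or.inl ⟨hne, h⟩

lemma eq_of_f166_eq {n : ℕ} (ha : Periodic a n) (hb : Periodic b n) (hn : Odd n) : a = b := by
  by_cases hpair : ∃ k, a k = b k ∧ a (k + 1) = b (k + 1)
  · obtain ⟨k, h₀, h₁⟩ := hpair
    exact ha.eq_of_eventually_eq hb hn.pos (eventually_eq_of_f166_eq hab h₀ h₁)
  push Not at hpair
  exfalso
  by_cases hsome : ∃ j, a j = b j
  · obtain ⟨j, hj⟩ := hsome
    have hp₁ : a (j + n - 1 + 1) = b (j + n - 1 + 1) := by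
      rw [Nat.sub_add_cancel (by have := hn.pos; omega), ha, hb, hj]
    have hp : a (j + n - 1) ≠ b (j + n - 1) := fun h => hpair _ h hp₁
    have halt := f166_eq_alternating hab hpair hp hp₁
    obtain ⟨k, hk, hd⟩ := (ha.sub hb).exists_eq_succ_of_odd hn (j + n - 1)
    simp only [Pi.sub_apply] at hd
    rcases halt k hk with ⟨hne, heq⟩ | ⟨heq, -, hne⟩
    · rw [heq, sub_self] at hd
      exact hne (sub_eq_zero.mp hd.symm)
    · rw [heq, sub_self] at hd
      exact hne (sub_eq_zero.mp hd)
  · push Not at hsome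
    obtain ⟨k, -, hk⟩ := ha.exists_eq_succ_of_odd hn 0
    exact f166_ne_of_ne_of_ne_of_ne (hab k) (hsome k) (hsome _) (hsome _) hk

end Rule166

section Cyclic

variable {n : ℕ} (hn : 0 < n)

lemma cyclicBC_f166_injective_of_odd (hodd : Odd n) : Injective (cyclicBC hn f166) := by
  intro x y hxy
  refine periodicExt_injective (hn := hn)
    (eq_of_f166_eq (fun k => ?_) (periodicExt_periodic x) (periodicExt_periodic y) hodd)
  rw [← periodicExt_cyclicBC f166 x, ← periodicExt_cyclicBC f166 y, hxy]

lemma periodicExt_alternating (he : Even n) (c : Q) (k : ℕ) :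
    periodicExt hn (fun i => ((i : ℕ) : Q) + c) k = k + c :=
  congrArg (· + c) ((ZMod.natCast_eq_natCast_iff' _ _ 2).mpr (Nat.mod_mod_of_dvd k he.two_dvd))

lemma cyclicBC_f166_alternating (he : Even n) (c : Q) :
    cyclicBC hn f166 (fun i => ((i : ℕ) : Q) + c) = fun _ => 1 := by
  funext i
  rw [cyclicBC_apply, periodicExt_alternating hn he, periodicExt_alternating hn he]
  push_cast [Nat.cast_sub hn, ZMod.natCast_eq_zero_iff_even.mpr he]
  generalize ((i : ℕ) : Q) = t
  revert t c
  decide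

lemma cyclicBC_f166_not_injective_of_even (he : Even n) : ¬ Injective (cyclicBC hn f166) := by
  intro hinj
  have h := congrFun (hinj ((cyclicBC_f166_alternating hn he 0).trans
    (cyclicBC_f166_alternating hn he 1).symm)) ⟨0, hn⟩
  simp at h

end Cyclic

theorem statement19 (n : ℕ) (hn : 1 ≤ n) :
    Function.Bijective (cyclicBC hn f166) ↔ n % 2 = 1 := by
  rw [← Nat.odd_iff]
  constructor
  · intro hbij
    by_contra hodd
    exact cyclicBC_f166_not_injective_of_even hn (Nat.not_odd_iff_even.mp hodd) hbij.injective
  · intro hodd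
    exact Finite.injective_iff_bijective.mp (cyclicBC_f166_injective_of_odd hn hodd)
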